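/- Theorem 5 (nonexistence part): For every even integer m > 2 there is no order-m Hadamard hypermatrix of side length 2: there is no H : (Fin m → Fin 2) → ℂ with every entry equal to −1 or 1 such that the BM product of the m-tuple (H, H^{⊤^{m−1}}, …, H^{⊤^2}, H^⊤) has entry 2 at every constant index and entry 0 at every non-constant index. -/

import Mathlib

/-
For even `m` let `c = m / 2`. If the index `i` is invariant under the cyclic shift by `c`, then in
every summand `∏ₜ H^{⊤^{-t}}(i[t+1 ↦ j])` of the BM product the factors at `t` and `t + c` coincide,
so for a `±1`-valued `H` the factors pair off into squares and the summand is `1`. Hence the BM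
product at `i` equals the side length `2`. The index `i(u) = [2u = 0]` is `c`-invariant and, for
`m > 2`, not constant, so a Hadamard hypermatrix would need the entry `0` there.
-/

/-- The BM product of an `m`-tuple of order-`m` cubic hypermatrices over index type `I`. -/
noncomputable def bmProd {m : ℕ} [NeZero m] {I : Type*} [Fintype I] [DecidableEq I]
    (A : Fin m → ((Fin m → I) → ℂ)) : (Fin m → I) → ℂ :=
  fun i => ∑ j : I, ∏ t : Fin m, A t (Function.update i (t + 1) j)

/-- The hypermatrix transpose (cyclic permutation of indices). -/
noncomputable def hTranspose {m : ℕ} [NeZero m] {I : Type*}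
    (A : (Fin m → I) → ℂ) : (Fin m → I) → ℂ :=
  fun i => A (fun s => i (s - 1))

/-- The `m`-tuple `(H, H^{⊤^{m−1}}, …, H^{⊤^2}, H^⊤)` whose `t`-th member (0-based) is
`H^{⊤^{(m−t) mod m}}`. -/
noncomputable def towerTuple {m : ℕ} [NeZero m] {I : Type*}
    (H : (Fin m → I) → ℂ) : Fin m → ((Fin m → I) → ℂ) :=
  fun t => hTranspose^[(m - t.val) % m] H

open Fin.NatCast in
lemma hTranspose_iterate_apply {m : ℕ} [NeZero m] {I : Type*}
    (A : (Fin m → I) → ℂ) (k : ℕ) (i : Fin m → I) :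
    hTranspose^[k] A i = A (fun s => i (s - (k : Fin m))) := by
  induction k generalizing i with
  | zero => simp
  | succ n ih =>
    rw [Function.iterate_succ_apply', hTranspose, ih]
    simp only [Nat.cast_succ, sub_sub]

open Fin.NatCast in
lemma towerTuple_apply {m : ℕ} [NeZero m] {I : Type*}
    (H : (Fin m → I) → ℂ) (t : Fin m) (x : Fin m → I) :
    towerTuple H t x = H (fun s => x (s + t)) := by
  have hexp : (((m - t.val) % m : ℕ) : Fin m) = -t := by
    ext
    rw [Fin.neg_def, Fin.val_natCast, Nat.mod_mod]
  simp only [towerTuple, hTranspose_iterate_apply, hexp, sub_neg_eq_add]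

lemma prod_eq_one_of_periodic_of_mul_self_eq_one {G M : Type*} [AddGroup G] [Fintype G]
    [CommMonoid M] {f : G → M} {c : G} (hc : c ≠ 0) (hcc : c + c = 0)
    (hper : Function.Periodic f c) (hsq : ∀ t, f t * f t = 1) :
    ∏ t, f t = 1 :=
  Finset.prod_ninvolution (· + c) (fun t => by simp only [hper t, hsq])
    (fun t _ h => hc (by simpa using h)) (fun _ => Finset.mem_univ _)
    (fun t => by simp only [add_assoc, hcc, add_zero])

lemma bmProd_towerTuple_of_periodic {m : ℕ} [NeZero m] {I : Type*} [Fintype I]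
    [DecidableEq I] {H : (Fin m → I) → ℂ} (hH : ∀ x, H x = 1 ∨ H x = -1)
    {i : Fin m → I} {c : Fin m} (hc : c ≠ 0) (hcc : c + c = 0) (hi : Function.Periodic i c) :
    bmProd (towerTuple H) i = Fintype.card I := by
  have hfactor : ∀ (j : I) (t : Fin m), towerTuple H t (Function.update i (t + 1) j) =
      H (Function.update (fun s => i (s + t)) 1 j) := by
    intro j t
    rw [towerTuple_apply]
    congr 1
    funext s
    simp only [Function.update_apply, add_comm s t, add_right_inj]
  have hsummand : ∀ j : I, ∏ t, towerTuple H t (Function.update i (t + 1) j) = 1 := by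
    intro j
    simp only [hfactor]
    refine prod_eq_one_of_periodic_of_mul_self_eq_one hc hcc (fun t => ?_) (fun t => ?_)
    · simp only [← add_assoc, fun s => hi (s + t)]
    · rcases hH (Function.update (fun s => i (s + t)) 1 j) with h | h <;> simp [h]
  simp [bmProd, hsummand]

/-- Theorem 5 (nonexistence part): for every even `m > 2` there is no order-`m`
Hadamard hypermatrix of side length `2`. -/
theorem no_hadamard_hypermatrix_even_order {m : ℕ} [NeZero m]
    (hmeven : Even m) (hm : 2 < m) :
    ¬ ∃ H : (Fin m → Fin 2) → ℂ,
      (∀ i, H i = 1 ∨ H i = -1) ∧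
      (∀ i : Fin m → Fin 2, (∀ s t : Fin m, i s = i t) →
        bmProd (towerTuple H) i = (2 : ℂ)) ∧
      (∀ i : Fin m → Fin 2, (¬ ∀ s t : Fin m, i s = i t) →
        bmProd (towerTuple H) i = 0) := by
  rintro ⟨H, hH, -, hnonconst⟩
  obtain ⟨k, rfl⟩ := hmeven
  let c : Fin (k + k) := ⟨k, by omega⟩
  have hc : c ≠ 0 := fun h => by simp only [c, Fin.ext_iff, Fin.val_zero] at h; omega
  have hcc : c + c = 0 := Fin.ext (by simp [c, Fin.val_add])
  let i : Fin (k + k) → Fin 2 := fun u => if u + u = 0 then 1 else 0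
  have hi : Function.Periodic i c := fun u => by
    simp only [i, add_add_add_comm u c u c, hcc, add_zero]
  have hone : (1 : Fin (k + k)) + 1 ≠ 0 := by
    simp [Fin.ext_iff, Fin.val_add, Nat.mod_eq_of_lt, hm]
  have hi_nonconst : ¬ ∀ s t, i s = i t := fun h => by simpa [i, hone] using h 0 1
  have htwo := bmProd_towerTuple_of_periodic hH hc hcc hi
  rw [hnonconst i hi_nonconst] at htwo
  norm_num at htwo
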